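/- arXiv:2210.07738 — 9 statements merged into one kernel-verified Lean document; each statement's English description precedes it below -/
import Mathlib

section
/- For every τ : ℕ the endofunctor ⟨τ⟩ on Psh carries a time-graded strong monoidal (graded monad-like) structure: the natural isomorphism η_A : A ≅ ⟨0⟩A given by pairing an A-value with the proof 0 ≤ t (via t ∸ 0 = t) and the natural isomorphisms μ_{A,τ₁,τ₂} : ⟨τ₁⟩(⟨τ₂⟩A) ≅ ⟨τ₁+τ₂⟩A given by the identity on A-values, combining the proofs τ₁ ≤ t and τ₂ ≤ t ∸ τ₁ into a proof of τ₁ + τ₂ ≤ t (via (t ∸ τ₁) ∸ τ₂ = t ∸ (τ₁ + τ₂)), satisfy the graded monad laws: μ_{A,0,τ} ∘ η_{⟨τ⟩A} = id (modulo 0 + τ = τ), μ_{A,τ,0} ∘ ⟨τ⟩(η_A) = id (modulo τ + 0 = τ), and μ_{A,τ₁+τ₂,τ₃} ∘ μ_{⟨τ₃⟩A,τ₁,τ₂} = μ_{A,τ₁,τ₂+τ₃} ∘ ⟨τ₁⟩(μ_{A,τ₂,τ₃}) (modulo associativity of +), where equalities of indices are mediated by transport along them. -/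
/-- The category `Psh` of functors from the preorder `(ℕ, ≤)` to `Type`:
an object consists of sets `obj t` together with restriction maps respecting
reflexivity and transitivity. -/
structure Psh : Type 1 where
  obj : ℕ → Type
  map : ∀ {t t' : ℕ}, t ≤ t' → obj t → obj t'
  map_id : ∀ (t : ℕ) (a : obj t), map (le_refl t) a = a
  map_comp : ∀ {t t' t'' : ℕ} (h : t ≤ t') (h' : t' ≤ t'') (a : obj t),
      map (Nat.le_trans h h') a = map h' (map h a)

/-- Morphisms of presheaves: families of components natural in the stage. -/
structure PshHom (A B : Psh) where
  app : ∀ t, A.obj t → B.obj t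
  naturality : ∀ {t t' : ℕ} (h : t ≤ t') (a : A.obj t),
      app t' (A.map h a) = B.map h (app t a)

/-- Transport of presheaf values along an equality of stages. -/
def Psh.cast (A : Psh) {t t' : ℕ} (h : t = t') : A.obj t → A.obj t' :=
  fun a => _root_.cast (congrArg A.obj h) a

/-- The future modality `[τ]`: `([τ]A)(t) = A(t + τ)`. -/
def fut (τ : ℕ) (A : Psh) : Psh where
  obj t := A.obj (t + τ)
  map h a := A.map (Nat.add_le_add_right h τ) a
  map_id t a := A.map_id (t + τ) a
  map_comp h h' a := A.map_comp (Nat.add_le_add_right h τ) (Nat.add_le_add_right h' τ) a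

/-- The action of `[τ]` on families of components. -/
def futMap (τ : ℕ) {A B : Psh} (f : ∀ t, A.obj t → B.obj t) (t : ℕ) :
    (fut τ A).obj t → (fut τ B).obj t :=
  f (t + τ)

/-- The past modality `⟨τ⟩`: `(⟨τ⟩A)(t) = (τ ≤ t) × A(t ∸ τ)`. -/
def past (τ : ℕ) (A : Psh) : Psh where
  obj t := PLift (τ ≤ t) × A.obj (t - τ)
  map h x := ⟨⟨Nat.le_trans x.1.down h⟩, A.map (Nat.sub_le_sub_right h τ) x.2⟩
  map_id t x := by
    obtain ⟨⟨p⟩, a⟩ := x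
    exact congrArg (fun b => (⟨⟨Nat.le_trans p (le_refl t)⟩, b⟩ : PLift (τ ≤ t) × A.obj (t - τ)))
      (A.map_id (t - τ) a)
  map_comp h h' x := by
    obtain ⟨⟨p⟩, a⟩ := x
    exact congrArg (fun b => (⟨⟨_⟩, b⟩ : PLift (τ ≤ _) × A.obj _))
      (A.map_comp (Nat.sub_le_sub_right h τ) (Nat.sub_le_sub_right h' τ) a)

/-- The action of `⟨τ⟩` on families of components. -/
def pastMap (τ : ℕ) {A B : Psh} (f : ∀ t, A.obj t → B.obj t) (t : ℕ) :
    (past τ A).obj t → (past τ B).obj t :=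
  fun x => ⟨x.1, f (t - τ) x.2⟩

/-- `ε_A : [0]A ≅ A`, given by the identity on `A`-values (via `t + 0 = t`). -/
def epsF (A : Psh) (t : ℕ) : (fut 0 A).obj t → A.obj t :=
  A.cast (Nat.add_zero t)

/-- `δ_{A,τ₁,τ₂} : [τ₁+τ₂]A ≅ [τ₁]([τ₂]A)`, given by the identity on `A`-values
(via `(t + τ₁) + τ₂ = t + (τ₁ + τ₂)`). -/
def deltaF (A : Psh) (τ₁ τ₂ t : ℕ) : (fut (τ₁ + τ₂) A).obj t → (fut τ₁ (fut τ₂ A)).obj t :=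
  A.cast (Nat.add_assoc t τ₁ τ₂).symm

/-- `η_A : A ≅ ⟨0⟩A`, pairing an `A`-value with the proof `0 ≤ t` (via `t ∸ 0 = t`). -/
def etaP (A : Psh) (t : ℕ) : A.obj t → (past 0 A).obj t :=
  fun a => ⟨⟨Nat.zero_le t⟩, A.cast (Nat.sub_zero t).symm a⟩

/-- `μ_{A,τ₁,τ₂} : ⟨τ₁⟩(⟨τ₂⟩A) ≅ ⟨τ₁+τ₂⟩A`, the identity on `A`-values, combining
the proofs `τ₁ ≤ t` and `τ₂ ≤ t ∸ τ₁` into `τ₁ + τ₂ ≤ t` (via `(t ∸ τ₁) ∸ τ₂ = t ∸ (τ₁ + τ₂)`). -/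
def muP (A : Psh) (τ₁ τ₂ t : ℕ) : (past τ₁ (past τ₂ A)).obj t → (past (τ₁ + τ₂) A).obj t :=
  fun x => ⟨⟨by have h1 := x.1.down; have h2 := x.2.1.down; omega⟩,
    A.cast (Nat.sub_sub t τ₁ τ₂) x.2.2⟩

/-- Transport of `[−]`-values along an equality of grades. -/
def fcastGrade (A : Psh) (t : ℕ) {τ τ' : ℕ} (h : τ = τ') : (fut τ A).obj t → (fut τ' A).obj t :=
  fun a => _root_.cast (congrArg (fun σ => (fut σ A).obj t) h) a

/-- Transport of `⟨−⟩`-values along an equality of grades. -/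
def pcastGrade (A : Psh) (t : ℕ) {τ τ' : ℕ} (h : τ = τ') : (past τ A).obj t → (past τ' A).obj t :=
  fun x => _root_.cast (congrArg (fun σ => (past σ A).obj t) h) x

/-- The unit `η^⊣_{A,τ} : A ⟶ [τ](⟨τ⟩A)` of the adjunction `⟨τ⟩ ⊣ [τ]`. -/
def etaAdj (A : Psh) (τ t : ℕ) : A.obj t → (fut τ (past τ A)).obj t :=
  fun a => ⟨⟨Nat.le_add_left τ t⟩, A.cast (by omega : t = t + τ - τ) a⟩

/-- The counit `ε^⊣_{A,τ} : ⟨τ⟩([τ]A) ⟶ A` of the adjunction `⟨τ⟩ ⊣ [τ]`. -/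
def epsAdj (A : Psh) (τ t : ℕ) : (past τ (fut τ A)).obj t → A.obj t :=
  fun x => A.cast (Nat.sub_add_cancel x.1.down) x.2

/-- `[τ ≤ τ']_A : [τ]A ⟶ [τ']A`, given by `A(t + τ ≤ t + τ')`. -/
def futMono {τ τ' : ℕ} (h : τ ≤ τ') (A : Psh) (t : ℕ) : (fut τ A).obj t → (fut τ' A).obj t :=
  A.map (Nat.add_le_add_left h t)

/-- `⟨τ ≤ τ'⟩_A : ⟨τ'⟩A ⟶ ⟨τ⟩A`, weakening the proof and restricting along `t ∸ τ' ≤ t ∸ τ`. -/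
def pastMono {τ τ' : ℕ} (h : τ ≤ τ') (A : Psh) (t : ℕ) : (past τ' A).obj t → (past τ A).obj t :=
  fun x => ⟨⟨Nat.le_trans h x.1.down⟩, A.map (by omega : t - τ' ≤ t - τ) x.2⟩



section Helpers

lemma Psh.cast_rfl (A : Psh) {t : ℕ} (a : A.obj t) : A.cast rfl a = a := rfl

lemma Psh.cast_self (A : Psh) {t : ℕ} (h : t = t) (a : A.obj t) : A.cast h a = a := rfl

lemma past_cast_snd (τ : ℕ) (A : Psh) {t t' : ℕ} (e : t = t') (x : (past τ A).obj t) :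
    ((past τ A).cast e x).2 = A.cast (by rw [e]) x.2 := by subst e; rfl

lemma Psh.cast_cast (A : Psh) {t t' t'' : ℕ} (h : t = t') (h' : t' = t'') (a : A.obj t) :
    A.cast h' (A.cast h a) = A.cast (h.trans h') a := by subst h; subst h'; rfl

lemma Psh.cast_map (A : Psh) {s s' t t' : ℕ} (e : s = t) (e' : s' = t')
    (h : s ≤ s') (h2 : t ≤ t') (a : A.obj s) :
    A.cast e' (A.map h a) = A.map h2 (A.cast e a) := by
  subst e; subst e'; rfl

lemma past_ext (τ : ℕ) (A : Psh) {t : ℕ} (x y : (past τ A).obj t)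
    (h : x.2 = y.2) : x = y := by
  obtain ⟨⟨p⟩, a⟩ := x; obtain ⟨⟨q⟩, b⟩ := y
  simp_all
  rfl

lemma pcastGrade_eq (A : Psh) (t : ℕ) {τ τ' : ℕ} (h : τ = τ') (x : (past τ A).obj t) :
    pcastGrade A t h x
      = ⟨⟨h ▸ x.1.down⟩, A.cast (by rw [h]) x.2⟩ := by
  subst h; exact past_ext _ _ _ _ rfl

end Helpers

/-- The endofunctors `⟨τ⟩` on `Psh` carry a time-graded strong monoidal (graded
monad-like) structure: `η` and `μ` are natural isomorphisms and satisfy the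
graded monad laws, with equalities of grades mediated by transport. -/
theorem past_graded_monad :
    -- η is natural
    (∀ (A : Psh) {t t' : ℕ} (h : t ≤ t') (a : A.obj t),
        etaP A t' (A.map h a) = (past 0 A).map h (etaP A t a)) ∧
    -- μ is natural
    (∀ (A : Psh) (τ₁ τ₂ : ℕ) {t t' : ℕ} (h : t ≤ t') (x : (past τ₁ (past τ₂ A)).obj t),
        muP A τ₁ τ₂ t' ((past τ₁ (past τ₂ A)).map h x)
          = (past (τ₁ + τ₂) A).map h (muP A τ₁ τ₂ t x)) ∧
    -- η and μ are isomorphisms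
    (∀ (A : Psh) (t : ℕ), Function.Bijective (etaP A t)) ∧
    (∀ (A : Psh) (τ₁ τ₂ t : ℕ), Function.Bijective (muP A τ₁ τ₂ t)) ∧
    -- μ_{A,0,τ} ∘ η_{⟨τ⟩A} = id  (modulo 0 + τ = τ)
    (∀ (A : Psh) (τ t : ℕ) (x : (past τ A).obj t),
        muP A 0 τ t (etaP (past τ A) t x)
          = pcastGrade A t (show τ = 0 + τ by omega) x) ∧
    -- μ_{A,τ,0} ∘ ⟨τ⟩(η_A) = id  (modulo τ + 0 = τ)
    (∀ (A : Psh) (τ t : ℕ) (x : (past τ A).obj t),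
        muP A τ 0 t (pastMap τ (etaP A) t x)
          = pcastGrade A t (show τ = τ + 0 by omega) x) ∧
    -- μ_{A,τ₁+τ₂,τ₃} ∘ μ_{⟨τ₃⟩A,τ₁,τ₂} = μ_{A,τ₁,τ₂+τ₃} ∘ ⟨τ₁⟩(μ_{A,τ₂,τ₃})  (modulo associativity)
    (∀ (A : Psh) (τ₁ τ₂ τ₃ t : ℕ) (x : (past τ₁ (past τ₂ (past τ₃ A))).obj t),
        muP A (τ₁ + τ₂) τ₃ t (muP (past τ₃ A) τ₁ τ₂ t x)
          = pcastGrade A t (show τ₁ + (τ₂ + τ₃) = (τ₁ + τ₂) + τ₃ by omega)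
              (muP A τ₁ (τ₂ + τ₃) t (pastMap τ₁ (muP A τ₂ τ₃) t x))) := by
  refine ⟨?_, ?_, ?_, ?_, ?_, ?_, ?_⟩
  · intro A t t' h a
    exact past_ext _ _ _ _ (Psh.cast_map A (Nat.sub_zero t).symm (Nat.sub_zero t').symm h _ a)
  · intro A τ₁ τ₂ t t' h x
    exact past_ext _ _ _ _ (Psh.cast_map A (Nat.sub_sub t τ₁ τ₂) (Nat.sub_sub t' τ₁ τ₂) _ _ x.2.2)
  · intro A t
    constructor
    · intro a b h
      have := congrArg (fun x => A.cast (Nat.sub_zero t) (Prod.snd x)) h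
      simpa [etaP, Psh.cast_cast, Psh.cast_self] using this
    · intro x
      refine ⟨A.cast (Nat.sub_zero t) x.2, past_ext _ _ _ _ ?_⟩
      simp [etaP, Psh.cast_cast, Psh.cast_self]
  · intro A τ₁ τ₂ t
    constructor
    · intro a b h
      obtain ⟨⟨p⟩, ⟨q⟩, a2⟩ := a; obtain ⟨⟨p'⟩, ⟨q'⟩, b2⟩ := b
      refine past_ext _ _ _ _ (past_ext _ _ _ _ ?_)
      have := congrArg (fun x => A.cast (Nat.sub_sub t τ₁ τ₂).symm (Prod.snd x)) h
      simpa [muP, Psh.cast_cast, Psh.cast_self] using this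
    · intro x
      refine ⟨⟨⟨by have := x.1.down; omega⟩, ⟨by have := x.1.down; omega⟩,
        A.cast (Nat.sub_sub t τ₁ τ₂).symm x.2⟩, past_ext _ _ _ _ ?_⟩
      simp [muP, Psh.cast_cast, Psh.cast_self]
  · intro A τ t x
    rw [pcastGrade_eq]
    refine past_ext _ _ _ _ ?_
    simp only [muP, etaP]
    rw [past_cast_snd, Psh.cast_cast]
  · intro A τ t x
    rw [pcastGrade_eq]
    refine past_ext _ _ _ _ ?_
    simp only [muP, etaP, pastMap]
    rw [Psh.cast_cast]
  · intro A τ₁ τ₂ τ₃ t x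
    rw [pcastGrade_eq]
    refine past_ext _ _ _ _ ?_
    simp only [muP, pastMap]
    rw [past_cast_snd, Psh.cast_cast, Psh.cast_cast, Psh.cast_cast]
end

section
/- In Psh, the adjunction units interact with the graded comonad and monad structures: for all τ₁, τ₂ : ℕ and every object A, [τ₁]([τ₂](μ_{A,τ₂,τ₁})) ∘ [τ₁](η^⊣_{⟨τ₁⟩A,τ₂}) ∘ η^⊣_{A,τ₁} = δ_{⟨τ₁+τ₂⟩A,τ₁,τ₂} ∘ η^⊣_{A,τ₁+τ₂} as morphisms A ⟶ [τ₁]([τ₂](⟨τ₁+τ₂⟩A)), where μ_{A,τ₂,τ₁} : ⟨τ₂⟩(⟨τ₁⟩A) ⟶ ⟨τ₁+τ₂⟩A uses commutativity τ₂ + τ₁ = τ₁ + τ₂. -/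
lemma past_cast (A : Psh) (σ : ℕ) {s s' : ℕ} (h : s = s') (x : (past σ A).obj s) :
    (past σ A).cast h x = ⟨⟨h ▸ x.1.down⟩, A.cast (by rw [h]) x.2⟩ := by
  subst h; rfl

lemma pair_heq {p q : Prop} {α β : Type} (hpq : p = q) (hab : α = β) (x : p) (y : q) (a : α) (b : β)
    (h : HEq a b) : HEq ((⟨x⟩, a) : PLift p × α) ((⟨y⟩, b) : PLift q × β) := by
  subst hpq hab; cases h; rfl

lemma past_cast_snd_heq (A : Psh) (σ : ℕ) {s s' : ℕ} (h : s = s') (x : (past σ A).obj s) :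
    HEq ((past σ A).cast h x).2 x.2 := by
  subst h; rfl

/-- The adjunction units interact with the graded comonad and monad structures:
`[τ₁]([τ₂](μ_{A,τ₂,τ₁})) ∘ [τ₁](η^⊣_{⟨τ₁⟩A,τ₂}) ∘ η^⊣_{A,τ₁} = δ_{⟨τ₁+τ₂⟩A,τ₁,τ₂} ∘ η^⊣_{A,τ₁+τ₂}`,
where `μ_{A,τ₂,τ₁} : ⟨τ₂⟩(⟨τ₁⟩A) ⟶ ⟨τ₁+τ₂⟩A` uses commutativity `τ₂ + τ₁ = τ₁ + τ₂`. -/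
theorem etaAdj_interacts_with_delta_mu (A : Psh) (τ₁ τ₂ : ℕ) (t : ℕ) (a : A.obj t) :
    futMap τ₁
      (futMap τ₂ (fun t'' x => pcastGrade A t'' (Nat.add_comm τ₂ τ₁) (muP A τ₂ τ₁ t'' x))) t
      (futMap τ₁ (etaAdj (past τ₁ A) τ₂) t (etaAdj A τ₁ t a))
      = deltaF (past (τ₁ + τ₂) A) τ₁ τ₂ t (etaAdj A (τ₁ + τ₂) t a) := by
  simp only [futMap, etaAdj, muP, deltaF, pcastGrade_eq, past_cast, Psh.cast_cast]
  unfold pcastGrade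
  apply eq_of_heq
  refine (cast_heq _ _).trans (HEq.trans ?_ (cast_heq _ _).symm)
  refine pair_heq (by congr 1 <;> omega) (by congr 1; omega) _ _ _ _ ?_
  refine (cast_heq _ _).trans (HEq.trans ?_ (cast_heq _ _).symm)
  refine (past_cast_snd_heq _ _ _ _).trans ?_
  exact cast_heq _ _
end

section
/- In Psh, the adjunction counits interact with the graded comonad and monad structures: for all τ₁, τ₂ : ℕ and every object A, ε^⊣_{A,τ₁} ∘ ⟨τ₁⟩(ε^⊣_{[τ₁]A,τ₂}) ∘ ⟨τ₁⟩(⟨τ₂⟩(δ_{A,τ₂,τ₁})) = ε^⊣_{A,τ₁+τ₂} ∘ μ_{[τ₁+τ₂]A,τ₁,τ₂} as morphisms ⟨τ₁⟩(⟨τ₂⟩([τ₁+τ₂]A)) ⟶ A, where δ_{A,τ₂,τ₁} : [τ₂+τ₁]A ⟶ [τ₂]([τ₁]A) uses commutativity τ₁ + τ₂ = τ₂ + τ₁. -/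
/-- The adjunction counits interact with the graded comonad and monad structures:
`ε^⊣_{A,τ₁} ∘ ⟨τ₁⟩(ε^⊣_{[τ₁]A,τ₂}) ∘ ⟨τ₁⟩(⟨τ₂⟩(δ_{A,τ₂,τ₁})) = ε^⊣_{A,τ₁+τ₂} ∘ μ_{[τ₁+τ₂]A,τ₁,τ₂}`,
where `δ_{A,τ₂,τ₁} : [τ₂+τ₁]A ⟶ [τ₂]([τ₁]A)` uses commutativity `τ₁ + τ₂ = τ₂ + τ₁`. -/
theorem epsAdj_interacts_with_delta_mu (A : Psh) (τ₁ τ₂ : ℕ) (t : ℕ)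
    (x : (past τ₁ (past τ₂ (fut (τ₁ + τ₂) A))).obj t) :
    epsAdj A τ₁ t
      (pastMap τ₁ (epsAdj (fut τ₁ A) τ₂) t
        (pastMap τ₁
          (pastMap τ₂ (fun t'' y => deltaF A τ₂ τ₁ t'' (fcastGrade A t'' (Nat.add_comm τ₁ τ₂) y)))
          t x))
      = epsAdj A (τ₁ + τ₂) t (muP (fut (τ₁ + τ₂) A) τ₁ τ₂ t x) := by
  obtain ⟨⟨p⟩, ⟨q⟩, a⟩ := x
  simp only [pastMap, epsAdj, muP, deltaF, fcastGrade, Psh.cast, cast_cast]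
  apply eq_of_heq
  iterate 4 refine (cast_heq _ _).trans ?_
  iterate 2 refine HEq.trans ?_ (cast_heq _ _).symm
  exact HEq.rfl
end

section
/- Under the listed hypotheses, the grade-0 adjunction unit and counit are determined by the strong monoidal structures: for every object A, η^⊣_{A,0} = ε⁻¹_{⟨0⟩A} ∘ η_A : A → [0](⟨0⟩A) and ε^⊣_{A,0} = ε_A ∘ η⁻¹_{[0]A} : ⟨0⟩([0]A) → A. -/
open CategoryTheory

/-- Under the listed hypotheses (time-graded strong monoidal structures on `[−]` and `⟨−⟩`,
adjunctions `⟨τ⟩ ⊣ [τ]`, and their interaction laws), the grade-0 adjunction unit and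
counit are determined by the strong monoidal structures:
`η^⊣_{A,0} = ε⁻¹_{⟨0⟩A} ∘ η_A` and `ε^⊣_{A,0} = ε_A ∘ η⁻¹_{[0]A}`. -/
theorem grade_zero_adjunction_determined
    {C : Type*} [Category C]
    (fut past : ℕ → C ⥤ C)
    (futLe : ∀ {τ τ' : ℕ}, τ ≤ τ' → (fut τ ⟶ fut τ'))
    (pastLe : ∀ {τ τ' : ℕ}, τ ≤ τ' → (past τ' ⟶ past τ))
    (futLe_id : ∀ τ : ℕ, futLe (le_refl τ) = 𝟙 (fut τ))
    (futLe_comp : ∀ {τ τ' τ'' : ℕ} (h : τ ≤ τ') (h' : τ' ≤ τ''),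
        futLe (Nat.le_trans h h') = futLe h ≫ futLe h')
    (pastLe_id : ∀ τ : ℕ, pastLe (le_refl τ) = 𝟙 (past τ))
    (pastLe_comp : ∀ {τ τ' τ'' : ℕ} (h : τ ≤ τ') (h' : τ' ≤ τ''),
        pastLe (Nat.le_trans h h') = pastLe h' ≫ pastLe h)
    -- strong monoidal (graded comonad-like) structure on [−]
    (ε : fut 0 ≅ Functor.id C)
    (δ : ∀ τ₁ τ₂ : ℕ, fut (τ₁ + τ₂) ≅ fut τ₂ ⋙ fut τ₁)
    (comonad1 : ∀ (τ : ℕ) (A : C),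
        (δ 0 τ).hom.app A ≫ ε.hom.app ((fut τ).obj A) = eqToHom (by rw [Nat.zero_add]; rfl))
    (comonad2 : ∀ (τ : ℕ) (A : C),
        (δ τ 0).hom.app A ≫ (fut τ).map (ε.hom.app A) = eqToHom (by rw [Nat.add_zero]; rfl))
    (comonad3 : ∀ (τ₁ τ₂ τ₃ : ℕ) (A : C),
        (δ (τ₁ + τ₂) τ₃).hom.app A ≫ (δ τ₁ τ₂).hom.app ((fut τ₃).obj A)
          = eqToHom (by rw [Nat.add_assoc]) ≫ (δ τ₁ (τ₂ + τ₃)).hom.app A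
              ≫ (fut τ₁).map ((δ τ₂ τ₃).hom.app A))
    -- strong monoidal (graded monad-like) structure on ⟨−⟩
    (η : Functor.id C ≅ past 0)
    (μ : ∀ τ₁ τ₂ : ℕ, past τ₂ ⋙ past τ₁ ≅ past (τ₁ + τ₂))
    (monad1 : ∀ (τ : ℕ) (A : C),
        η.hom.app ((past τ).obj A) ≫ (μ 0 τ).hom.app A = eqToHom (by rw [Nat.zero_add]; rfl))
    (monad2 : ∀ (τ : ℕ) (A : C),
        (past τ).map (η.hom.app A) ≫ (μ τ 0).hom.app A = eqToHom (by rw [Nat.add_zero]; rfl))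
    (monad3 : ∀ (τ₁ τ₂ τ₃ : ℕ) (A : C),
        (μ τ₁ τ₂).hom.app ((past τ₃).obj A) ≫ (μ (τ₁ + τ₂) τ₃).hom.app A
          = (past τ₁).map ((μ τ₂ τ₃).hom.app A) ≫ (μ τ₁ (τ₂ + τ₃)).hom.app A
              ≫ eqToHom (by rw [Nat.add_assoc]))
    -- adjunctions ⟨τ⟩ ⊣ [τ]
    (ηAdj : ∀ (τ : ℕ) (A : C), A ⟶ (fut τ).obj ((past τ).obj A))
    (εAdj : ∀ (τ : ℕ) (A : C), (past τ).obj ((fut τ).obj A) ⟶ A)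
    (ηAdj_natural : ∀ (τ : ℕ) {A B : C} (f : A ⟶ B),
        f ≫ ηAdj τ B = ηAdj τ A ≫ (fut τ).map ((past τ).map f))
    (εAdj_natural : ∀ (τ : ℕ) {A B : C} (f : A ⟶ B),
        (past τ).map ((fut τ).map f) ≫ εAdj τ B = εAdj τ A ≫ f)
    (triangle1 : ∀ (τ : ℕ) (A : C),
        (past τ).map (ηAdj τ A) ≫ εAdj τ ((past τ).obj A) = 𝟙 ((past τ).obj A))
    (triangle2 : ∀ (τ : ℕ) (A : C),
        ηAdj τ ((fut τ).obj A) ≫ (fut τ).map (εAdj τ A) = 𝟙 ((fut τ).obj A))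
    -- interaction laws
    (inter1 : ∀ (τ : ℕ) (A : C),
        ε.hom.app ((past 0).obj A) ≫ η.inv.app A ≫ ηAdj τ A
            ≫ (fut τ).map ((pastLe (Nat.zero_le τ)).app A)
          = (futLe (Nat.zero_le τ)).app ((past 0).obj A))
    (inter2 : ∀ (τ : ℕ) (A : C),
        εAdj τ A ≫ ε.inv.app A ≫ η.hom.app ((fut 0).obj A)
            ≫ (past 0).map ((futLe (Nat.zero_le τ)).app A)
          = (pastLe (Nat.zero_le τ)).app ((fut τ).obj A)) :
    ∀ A : C,
      ηAdj 0 A = η.hom.app A ≫ ε.inv.app ((past 0).obj A)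
        ∧ εAdj 0 A = η.inv.app ((fut 0).obj A) ≫ ε.hom.app A := by
  intro A
  have h1 := inter1 0 A
  have h2 := inter2 0 A
  rw [show (Nat.zero_le 0) = le_refl 0 from rfl, futLe_id, pastLe_id] at h1 h2
  simp only [NatTrans.id_app, CategoryTheory.Functor.map_id, Category.comp_id] at h1 h2
  constructor
  · have : η.inv.app A ≫ ηAdj 0 A = ε.inv.app ((past 0).obj A) := by
      have := congrArg (fun f => ε.inv.app ((past 0).obj A) ≫ f) h1
      simpa [← Category.assoc] using this
    calc ηAdj 0 A = η.hom.app A ≫ η.inv.app A ≫ ηAdj 0 A := by simp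
    _ = η.hom.app A ≫ ε.inv.app ((past 0).obj A) := by rw [this]
  · have : εAdj 0 A ≫ ε.inv.app A = η.inv.app ((fut 0).obj A) := by
      have := congrArg (fun f => f ≫ η.inv.app ((fut 0).obj A)) h2
      simpa using this
    calc εAdj 0 A = (εAdj 0 A ≫ ε.inv.app A) ≫ ε.hom.app A := by simp
    _ = η.inv.app ((fut 0).obj A) ≫ ε.hom.app A := by rw [this]
end

section
/- Given a [−]-strength str for the graded monad T, i.e. a family str_{A,B,τ} : [τ]A × T τ B ⟶ T τ (A × B), natural in A and B, satisfying (s1) str_{A,B,0} ∘ (ε⁻¹_A × η^T_B) = η^T_{A×B}, (s2) T τ (snd) ∘ str_{A,B,τ} = snd, (s3) μ^T_{A×B,τ₁,τ₂} ∘ T τ₁ (str_{A,B,τ₂}) ∘ str_{[τ₂]A, T τ₂ B, τ₁} = str_{A,B,τ₁+τ₂} ∘ (δ⁻¹_{A,τ₁,τ₂} × μ^T_{B,τ₁,τ₂}), and (s4) T τ (α_{A,B,C}) ∘ str_{A×B,C,τ} ∘ (m_{A,B,τ} × id) ∘ α⁻¹ = str_{A,B×C,τ} ∘ (id × str_{B,C,τ})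 where α is the product associator, the family enr_{A,B,τ} := curry(T τ (ev_{A,B}) ∘ str_{A⟹B,A,τ}) : [τ](A⟹B) ⟶ (T τ A ⟹ T τ B) is natural and satisfies the [−]-enrichment laws: (e1) uncurry(enr_{A,A,τ}) ∘ ((η^[]_{A⟹A,τ} ∘ curry(snd)) × id) = snd : 1 × T τ A → T τ A; (e2) uncurry(enr_{A,C,τ}) ∘ (([τ](comp_{A,B,C}) ∘ m_{B⟹C, A⟹B, τ}) × id) ∘ α⁻¹ = uncurry(enr_{B,C,τ}) ∘ (id × uncurry(enr_{A,B,τ})); (e3) uncurry(enr_{A,B,0}) ∘ (ε⁻¹_{A⟹B} × η^T_A) = η^T_B ∘ ev_{A,B}; (e4) μ^T_{B,τ₁,τ₂} ∘ T τ₁(uncurry(enr_{A,B,τ₂})) ∘ uncurry(enr_{T τ₂ A, [τ₂](A⟹B) × T τ₂ A, τ₁}) ∘ ([τ₁](curry(id)) × id) = uncurry(enr_{A,B,τ₁+τ₂}) ∘ (δ⁻¹_{A⟹B,τ₁,τ₂} × μ^T_{A,τ₁,τ₂}). -/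
open CategoryTheory

universe v u

/-- A cartesian closed category equipped with a time-graded strong monoidal family
of product-preserving endofunctors `[τ]` (with counit `ε`, comultiplication `δ`, and
monotonicity maps `[τ ≤ τ']`) and a graded monad `(T, η^T, μ^T)` graded by `(ℕ, 0, +)`. -/
structure TemporalSetup (C : Type u) [Category.{v} C] where
  /-- binary products -/
  prod : C → C → C
  fst : ∀ A B : C, prod A B ⟶ A
  snd : ∀ A B : C, prod A B ⟶ B
  lift : ∀ {X A B : C}, (X ⟶ A) → (X ⟶ B) → (X ⟶ prod A B)
  lift_fst : ∀ {X A B : C} (f : X ⟶ A) (g : X ⟶ B), lift f g ≫ fst A B = f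
  lift_snd : ∀ {X A B : C} (f : X ⟶ A) (g : X ⟶ B), lift f g ≫ snd A B = g
  lift_unique : ∀ {X A B : C} (h : X ⟶ prod A B), lift (h ≫ fst A B) (h ≫ snd A B) = h
  /-- terminal object -/
  one : C
  bang : ∀ X : C, X ⟶ one
  bang_unique : ∀ {X : C} (f : X ⟶ one), f = bang X
  /-- exponentials -/
  exp : C → C → C
  curry : ∀ {X A B : C}, (prod X A ⟶ B) → (X ⟶ exp A B)
  uncurry : ∀ {X A B : C}, (X ⟶ exp A B) → (prod X A ⟶ B)
  uncurry_curry : ∀ {X A B : C} (f : prod X A ⟶ B), uncurry (curry f) = f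
  curry_uncurry : ∀ {X A B : C} (g : X ⟶ exp A B), curry (uncurry g) = g
  curry_natural : ∀ {X' X A B : C} (h : X' ⟶ X) (f : prod X A ⟶ B),
      h ≫ curry f = curry (lift (fst X' A ≫ h) (snd X' A) ≫ f)
  /-- the endofunctors `[τ]` -/
  fut : ℕ → C ⥤ C
  /-- `[τ]` preserves binary products: `m` is inverse to the comparison map -/
  m : ∀ (A B : C) (τ : ℕ), prod ((fut τ).obj A) ((fut τ).obj B) ⟶ (fut τ).obj (prod A B)
  m_comparison : ∀ (A B : C) (τ : ℕ),
      m A B τ ≫ lift ((fut τ).map (fst A B)) ((fut τ).map (snd A B)) = 𝟙 _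
  comparison_m : ∀ (A B : C) (τ : ℕ),
      lift ((fut τ).map (fst A B)) ((fut τ).map (snd A B)) ≫ m A B τ = 𝟙 _
  /-- monotonicity maps `[τ ≤ τ']`, functorial in `≤` -/
  futLe : ∀ {τ τ' : ℕ}, τ ≤ τ' → (fut τ ⟶ fut τ')
  futLe_id : ∀ τ : ℕ, futLe (le_refl τ) = 𝟙 (fut τ)
  futLe_comp : ∀ {τ τ' τ'' : ℕ} (h : τ ≤ τ') (h' : τ' ≤ τ''),
      futLe (Nat.le_trans h h') = futLe h ≫ futLe h'
  /-- graded comonad structure on `[−]` -/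
  ε : fut 0 ≅ Functor.id C
  δ : ∀ τ₁ τ₂ : ℕ, fut (τ₁ + τ₂) ≅ fut τ₂ ⋙ fut τ₁
  comonad1 : ∀ (τ : ℕ) (A : C),
      (δ 0 τ).hom.app A ≫ ε.hom.app ((fut τ).obj A) = eqToHom (by rw [Nat.zero_add]; rfl)
  comonad2 : ∀ (τ : ℕ) (A : C),
      (δ τ 0).hom.app A ≫ (fut τ).map (ε.hom.app A) = eqToHom (by rw [Nat.add_zero]; rfl)
  comonad3 : ∀ (τ₁ τ₂ τ₃ : ℕ) (A : C),
      (δ (τ₁ + τ₂) τ₃).hom.app A ≫ (δ τ₁ τ₂).hom.app ((fut τ₃).obj A)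
        = eqToHom (by rw [Nat.add_assoc]) ≫ (δ τ₁ (τ₂ + τ₃)).hom.app A
            ≫ (fut τ₁).map ((δ τ₂ τ₃).hom.app A)
  /-- the graded monad `T` -/
  T : ℕ → C ⥤ C
  ηT : Functor.id C ⟶ T 0
  μT : ∀ τ₁ τ₂ : ℕ, T τ₂ ⋙ T τ₁ ⟶ T (τ₁ + τ₂)
  monad1 : ∀ (τ : ℕ) (A : C),
      ηT.app ((T τ).obj A) ≫ (μT 0 τ).app A = eqToHom (by rw [Nat.zero_add]; rfl)
  monad2 : ∀ (τ : ℕ) (A : C),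
      (T τ).map (ηT.app A) ≫ (μT τ 0).app A = eqToHom (by rw [Nat.add_zero]; rfl)
  monad3 : ∀ (τ₁ τ₂ τ₃ : ℕ) (A : C),
      (μT τ₁ τ₂).app ((T τ₃).obj A) ≫ (μT (τ₁ + τ₂) τ₃).app A
        = (T τ₁).map ((μT τ₂ τ₃).app A) ≫ (μT τ₁ (τ₂ + τ₃)).app A
            ≫ eqToHom (by rw [Nat.add_assoc])

namespace TemporalSetup

variable {C : Type u} [Category.{v} C] (S : TemporalSetup C)

/-- The functorial action of the product on morphisms. -/
def pmap {A A' B B' : C} (f : A ⟶ A') (g : B ⟶ B') : S.prod A B ⟶ S.prod A' B' :=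
  S.lift (S.fst A B ≫ f) (S.snd A B ≫ g)

/-- The product associator `α : (A × B) × X ⟶ A × (B × X)`. -/
def assocHom (A B X : C) : S.prod (S.prod A B) X ⟶ S.prod A (S.prod B X) :=
  S.lift (S.fst (S.prod A B) X ≫ S.fst A B)
    (S.lift (S.fst (S.prod A B) X ≫ S.snd A B) (S.snd (S.prod A B) X))

/-- The inverse associator `α⁻¹ : A × (B × X) ⟶ (A × B) × X`. -/
def assocInv (A B X : C) : S.prod A (S.prod B X) ⟶ S.prod (S.prod A B) X :=
  S.lift (S.lift (S.fst A (S.prod B X)) (S.snd A (S.prod B X) ≫ S.fst B X))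
    (S.snd A (S.prod B X) ≫ S.snd B X)

/-- Evaluation `ev_{A,B} := uncurry(id) : (A ⟹ B) × A ⟶ B`. -/
def ev (A B : C) : S.prod (S.exp A B) A ⟶ B :=
  S.uncurry (𝟙 (S.exp A B))

/-- Internal composition `comp_{A,B,X} : (B ⟹ X) × (A ⟹ B) ⟶ (A ⟹ X)`. -/
def comp (A B X : C) : S.prod (S.exp B X) (S.exp A B) ⟶ S.exp A X :=
  S.curry (S.assocHom (S.exp B X) (S.exp A B) A ≫ S.pmap (𝟙 (S.exp B X)) (S.ev A B) ≫ S.ev B X)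

/-- `η^[]_{X,τ} := [0 ≤ τ]_X ∘ ε⁻¹_X : X ⟶ [τ]X`. -/
def etaFut (X : C) (τ : ℕ) : X ⟶ (S.fut τ).obj X :=
  S.ε.inv.app X ≫ (S.futLe (Nat.zero_le τ)).app X

/-- Covariant action of the exponential `A ⟹ −` on morphisms. -/
def epost (A : C) {B B' : C} (g : B ⟶ B') : S.exp A B ⟶ S.exp A B' :=
  S.curry (S.ev A B ≫ g)

/-- Contravariant action of the exponential `− ⟹ B` on morphisms. -/
def epre {A A' : C} (f : A' ⟶ A) (B : C) : S.exp A B ⟶ S.exp A' B :=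
  S.curry (S.pmap (𝟙 (S.exp A B)) f ≫ S.ev A B)

/-- The `[−]`-enrichment induced by a `[−]`-strength:
`enr_{A,B,τ} := curry(T τ (ev_{A,B}) ∘ str_{A⟹B,A,τ})`. -/
def enrOf
    (str : ∀ (A B : C) (τ : ℕ),
      S.prod ((S.fut τ).obj A) ((S.T τ).obj B) ⟶ (S.T τ).obj (S.prod A B))
    (A B : C) (τ : ℕ) :
    (S.fut τ).obj (S.exp A B) ⟶ S.exp ((S.T τ).obj A) ((S.T τ).obj B) :=
  S.curry (str (S.exp A B) A τ ≫ (S.T τ).map (S.ev A B))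

/-- The `[−]`-strength induced by a `[−]`-enrichment:
`str_{A,B,τ} := uncurry(enr_{B,A×B,τ}) ∘ ([τ](curry(id_{A×B})) × id)`. -/
def strOf
    (enr : ∀ (A B : C) (τ : ℕ),
      (S.fut τ).obj (S.exp A B) ⟶ S.exp ((S.T τ).obj A) ((S.T τ).obj B))
    (A B : C) (τ : ℕ) :
    S.prod ((S.fut τ).obj A) ((S.T τ).obj B) ⟶ (S.T τ).obj (S.prod A B) :=
  S.pmap ((S.fut τ).map (S.curry (𝟙 (S.prod A B)))) (𝟙 ((S.T τ).obj B))
    ≫ S.uncurry (enr B (S.prod A B) τ)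

section Aux

variable {C : Type u} [Category.{v} C] (S : TemporalSetup C)

theorem prod_hom_ext {X A B : C} {h k : X ⟶ S.prod A B}
    (h1 : h ≫ S.fst A B = k ≫ S.fst A B) (h2 : h ≫ S.snd A B = k ≫ S.snd A B) :
    h = k := by
  rw [← S.lift_unique h, ← S.lift_unique k, h1, h2]

theorem comp_lift {W X A B : C} (h : W ⟶ X) (f : X ⟶ A) (g : X ⟶ B) :
    h ≫ S.lift f g = S.lift (h ≫ f) (h ≫ g) := by
  apply S.prod_hom_ext <;>
    simp only [Category.assoc, S.lift_fst, S.lift_snd]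

@[simp] theorem pmap_fst {A A' B B' : C} (f : A ⟶ A') (g : B ⟶ B') :
    S.pmap f g ≫ S.fst A' B' = S.fst A B ≫ f := S.lift_fst _ _

@[simp] theorem pmap_snd {A A' B B' : C} (f : A ⟶ A') (g : B ⟶ B') :
    S.pmap f g ≫ S.snd A' B' = S.snd A B ≫ g := S.lift_snd _ _

theorem pmap_fst_assoc {A A' B B' Z : C} (f : A ⟶ A') (g : B ⟶ B') (h : A' ⟶ Z) :
    S.pmap f g ≫ S.fst A' B' ≫ h = S.fst A B ≫ f ≫ h := by
  rw [← Category.assoc, S.pmap_fst, Category.assoc]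

theorem pmap_snd_assoc {A A' B B' Z : C} (f : A ⟶ A') (g : B ⟶ B') (h : B' ⟶ Z) :
    S.pmap f g ≫ S.snd A' B' ≫ h = S.snd A B ≫ g ≫ h := by
  rw [← Category.assoc, S.pmap_snd, Category.assoc]

theorem pmap_id (A B : C) : S.pmap (𝟙 A) (𝟙 B) = 𝟙 (S.prod A B) := by
  apply S.prod_hom_ext <;> simp

theorem pmap_comp {A A' A'' B B' B'' : C} (f : A ⟶ A') (f' : A' ⟶ A'')
    (g : B ⟶ B') (g' : B' ⟶ B'') :
    S.pmap (f ≫ f') (g ≫ g') = S.pmap f g ≫ S.pmap f' g' := by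
  apply S.prod_hom_ext
  · rw [S.pmap_fst, Category.assoc, S.pmap_fst, S.pmap_fst_assoc]
  · rw [S.pmap_snd, Category.assoc, S.pmap_snd, S.pmap_snd_assoc]


theorem uncurry_natural {X' X A B : C} (h : X' ⟶ X) (g : X ⟶ S.exp A B) :
    S.uncurry (h ≫ g) = S.pmap h (𝟙 A) ≫ S.uncurry g := by
  conv_lhs => rw [← S.curry_uncurry g]
  rw [S.curry_natural, S.uncurry_curry]
  congr 1
  apply S.prod_hom_ext <;> simp [TemporalSetup.pmap, S.lift_fst, S.lift_snd]

theorem uncurry_eq {X A B : C} (g : X ⟶ S.exp A B) :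
    S.uncurry g = S.pmap g (𝟙 A) ≫ S.ev A B := by
  have := S.uncurry_natural g (𝟙 (S.exp A B))
  simpa [TemporalSetup.ev] using this

theorem uncurry_enrOf
    (str : ∀ (A B : C) (τ : ℕ),
      S.prod ((S.fut τ).obj A) ((S.T τ).obj B) ⟶ (S.T τ).obj (S.prod A B))
    (A B : C) (τ : ℕ) :
    S.uncurry (S.enrOf str A B τ)
      = str (S.exp A B) A τ ≫ (S.T τ).map (S.ev A B) := by
  rw [TemporalSetup.enrOf, S.uncurry_curry]

theorem pmap_comp_left {A A' A'' B : C} (f : A ⟶ A') (f' : A' ⟶ A'') :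
    S.pmap (f ≫ f') (𝟙 B) = S.pmap f (𝟙 B) ≫ S.pmap f' (𝟙 B) := by
  rw [← S.pmap_comp, Category.comp_id]

theorem pmap_comp_right {A B B' B'' : C} (g : B ⟶ B') (g' : B' ⟶ B'') :
    S.pmap (𝟙 A) (g ≫ g') = S.pmap (𝟙 A) g ≫ S.pmap (𝟙 A) g' := by
  rw [← S.pmap_comp, Category.comp_id]

theorem pmap_swap {A A' B B' : C} (f : A ⟶ A') (g : B ⟶ B') :
    S.pmap f (𝟙 B) ≫ S.pmap (𝟙 A') g = S.pmap (𝟙 A) g ≫ S.pmap f (𝟙 B') := by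
  rw [← S.pmap_comp, ← S.pmap_comp, Category.comp_id, Category.id_comp,
    Category.comp_id, Category.id_comp]

theorem uncurry_epost (A : C) {B B' : C} (g : B ⟶ B') :
    S.uncurry (S.epost A g) = S.ev A B ≫ g := by
  rw [TemporalSetup.epost, S.uncurry_curry]

theorem uncurry_epre {A A' : C} (f : A' ⟶ A) (B : C) :
    S.uncurry (S.epre f B) = S.pmap (𝟙 (S.exp A B)) f ≫ S.ev A B := by
  rw [TemporalSetup.epre, S.uncurry_curry]

theorem uncurry_comp (A B X : C) :
    S.uncurry (S.comp A B X)
      = S.assocHom (S.exp B X) (S.exp A B) A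
          ≫ S.pmap (𝟙 (S.exp B X)) (S.ev A B) ≫ S.ev B X := by
  rw [TemporalSetup.comp, S.uncurry_curry]

theorem curry_eq_of_uncurry_eq {X A B : C} {g g' : X ⟶ S.exp A B}
    (h : S.uncurry g = S.uncurry g') : g = g' := by
  rw [← S.curry_uncurry g, ← S.curry_uncurry g', h]

end Aux

end TemporalSetup


open TemporalSetup in
/-- Given a `[−]`-strength `str` for the graded monad `T` (natural and satisfying
(s1)–(s4)), the induced family `enr := curry(T τ (ev) ∘ str)` is natural and
satisfies the `[−]`-enrichment laws (e1)–(e4). -/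
theorem strength_to_enrichment
    {C : Type u} [Category.{v} C] (S : TemporalSetup C)
    (str : ∀ (A B : C) (τ : ℕ),
      S.prod ((S.fut τ).obj A) ((S.T τ).obj B) ⟶ (S.T τ).obj (S.prod A B))
    (str_natural : ∀ {A A' B B' : C} (f : A ⟶ A') (g : B ⟶ B') (τ : ℕ),
      S.pmap ((S.fut τ).map f) ((S.T τ).map g) ≫ str A' B' τ
        = str A B τ ≫ (S.T τ).map (S.pmap f g))
    (s1 : ∀ A B : C,
      S.pmap (S.ε.inv.app A) (S.ηT.app B) ≫ str A B 0 = S.ηT.app (S.prod A B))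
    (s2 : ∀ (A B : C) (τ : ℕ),
      str A B τ ≫ (S.T τ).map (S.snd A B) = S.snd ((S.fut τ).obj A) ((S.T τ).obj B))
    (s3 : ∀ (A B : C) (τ₁ τ₂ : ℕ),
      str ((S.fut τ₂).obj A) ((S.T τ₂).obj B) τ₁ ≫ (S.T τ₁).map (str A B τ₂)
          ≫ (S.μT τ₁ τ₂).app (S.prod A B)
        = S.pmap ((S.δ τ₁ τ₂).inv.app A) ((S.μT τ₁ τ₂).app B) ≫ str A B (τ₁ + τ₂))
    (s4 : ∀ (A B X : C) (τ : ℕ),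
      S.assocInv ((S.fut τ).obj A) ((S.fut τ).obj B) ((S.T τ).obj X)
          ≫ S.pmap (S.m A B τ) (𝟙 ((S.T τ).obj X))
          ≫ str (S.prod A B) X τ ≫ (S.T τ).map (S.assocHom A B X)
        = S.pmap (𝟙 ((S.fut τ).obj A)) (str B X τ) ≫ str A (S.prod B X) τ) :
    -- the induced enrichment is natural in B ...
    (∀ (A : C) {B B' : C} (g : B ⟶ B') (τ : ℕ),
      (S.fut τ).map (S.epost A g) ≫ S.enrOf str A B' τ
        = S.enrOf str A B τ ≫ S.epost ((S.T τ).obj A) ((S.T τ).map g)) ∧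
    -- ... and in A
    (∀ {A A' : C} (f : A' ⟶ A) (B : C) (τ : ℕ),
      (S.fut τ).map (S.epre f B) ≫ S.enrOf str A' B τ
        = S.enrOf str A B τ ≫ S.epre ((S.T τ).map f) ((S.T τ).obj B)) ∧
    -- (e1)
    (∀ (A : C) (τ : ℕ),
      S.pmap (S.curry (S.snd S.one A) ≫ S.etaFut (S.exp A A) τ) (𝟙 ((S.T τ).obj A))
          ≫ S.uncurry (S.enrOf str A A τ)
        = S.snd S.one ((S.T τ).obj A)) ∧
    -- (e2)
    (∀ (A B X : C) (τ : ℕ),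
      S.assocInv ((S.fut τ).obj (S.exp B X)) ((S.fut τ).obj (S.exp A B)) ((S.T τ).obj A)
          ≫ S.pmap (S.m (S.exp B X) (S.exp A B) τ ≫ (S.fut τ).map (S.comp A B X))
              (𝟙 ((S.T τ).obj A))
          ≫ S.uncurry (S.enrOf str A X τ)
        = S.pmap (𝟙 ((S.fut τ).obj (S.exp B X))) (S.uncurry (S.enrOf str A B τ))
            ≫ S.uncurry (S.enrOf str B X τ)) ∧
    -- (e3)
    (∀ A B : C,
      S.pmap (S.ε.inv.app (S.exp A B)) (S.ηT.app A) ≫ S.uncurry (S.enrOf str A B 0)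
        = S.ev A B ≫ S.ηT.app B) ∧
    -- (e4)
    (∀ (A B : C) (τ₁ τ₂ : ℕ),
      S.pmap
            ((S.fut τ₁).map
              (S.curry (𝟙 (S.prod ((S.fut τ₂).obj (S.exp A B)) ((S.T τ₂).obj A)))))
            (𝟙 ((S.T τ₁).obj ((S.T τ₂).obj A)))
          ≫ S.uncurry (S.enrOf str ((S.T τ₂).obj A)
              (S.prod ((S.fut τ₂).obj (S.exp A B)) ((S.T τ₂).obj A)) τ₁)
          ≫ (S.T τ₁).map (S.uncurry (S.enrOf str A B τ₂))
          ≫ (S.μT τ₁ τ₂).app B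
        = S.pmap ((S.δ τ₁ τ₂).inv.app (S.exp A B)) ((S.μT τ₁ τ₂).app A)
            ≫ S.uncurry (S.enrOf str A B (τ₁ + τ₂))) := by
  -- specialized naturality of the strength
  have natL : ∀ {A A' : C} (f : A ⟶ A') (B : C) (τ : ℕ),
      S.pmap ((S.fut τ).map f) (𝟙 ((S.T τ).obj B)) ≫ str A' B τ
        = str A B τ ≫ (S.T τ).map (S.pmap f (𝟙 B)) := by
    intro A A' f B τ
    simpa using str_natural f (𝟙 B) τ
  have natR : ∀ (A : C) {B B' : C} (g : B ⟶ B') (τ : ℕ),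
      S.pmap (𝟙 ((S.fut τ).obj A)) ((S.T τ).map g) ≫ str A B' τ
        = str A B τ ≫ (S.T τ).map (S.pmap (𝟙 A) g) := by
    intro A B B' g τ
    simpa using str_natural (𝟙 A) g τ
  have evpair : ∀ {X A B : C} (g : X ⟶ S.exp A B),
      S.pmap g (𝟙 A) ≫ S.ev A B = S.uncurry g := fun g => (S.uncurry_eq g).symm
  refine ⟨?_, ?_, ?_, ?_, ?_, ?_⟩
  · -- naturality in B
    intro A B B' g τ
    apply S.curry_eq_of_uncurry_eq
    rw [S.uncurry_natural, S.uncurry_natural, S.uncurry_enrOf]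
    slice_lhs 1 2 => rw [natL]
    slice_lhs 2 3 => rw [← Functor.map_comp, evpair, S.uncurry_epost]
    slice_rhs 1 2 => rw [S.uncurry_epost, ← Category.assoc, evpair, S.uncurry_enrOf]
    simp [Functor.map_comp]
  · -- naturality in A
    intro A A' f B τ
    apply S.curry_eq_of_uncurry_eq
    rw [S.uncurry_natural, S.uncurry_natural, S.uncurry_enrOf]
    slice_lhs 1 2 => rw [natL]
    slice_lhs 2 3 => rw [← Functor.map_comp, evpair, S.uncurry_epre, Functor.map_comp]
    slice_lhs 1 2 => rw [← natR]
    slice_rhs 1 2 => rw [S.uncurry_epre, ← Category.assoc, S.pmap_swap]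
    slice_rhs 2 3 => rw [evpair, S.uncurry_enrOf]
    simp
  · -- (e1)
    intro A τ
    have h1 : S.curry (S.snd S.one A) ≫ S.etaFut (S.exp A A) τ
        = S.etaFut S.one τ ≫ (S.fut τ).map (S.curry (S.snd S.one A)) := by
      have h2 := S.ε.inv.naturality (S.curry (S.snd S.one A))
      simp only [Functor.id_map] at h2
      have h3 := (S.futLe (Nat.zero_le τ)).naturality (S.curry (S.snd S.one A))
      rw [TemporalSetup.etaFut, TemporalSetup.etaFut, ← Category.assoc, h2,
        Category.assoc, h3, ← Category.assoc]
    rw [S.uncurry_enrOf, h1, S.pmap_comp_left]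
    slice_lhs 2 3 => rw [natL]
    slice_lhs 3 4 => rw [← Functor.map_comp, evpair, S.uncurry_curry]
    slice_lhs 2 3 => rw [s2]
    rw [S.pmap_snd, Category.comp_id]
  · -- (e2)
    intro A B X τ
    rw [S.uncurry_enrOf, S.uncurry_enrOf, S.uncurry_enrOf, S.pmap_comp_left]
    slice_lhs 3 4 => rw [natL]
    slice_lhs 4 5 => rw [← Functor.map_comp, evpair, S.uncurry_comp]
    rw [Functor.map_comp, Functor.map_comp]
    slice_lhs 1 4 => rw [s4]
    slice_lhs 2 3 => rw [← natR]
    slice_lhs 1 2 => rw [← S.pmap_comp_right]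
    simp [Functor.map_comp]
  · -- (e3)
    intro A B
    rw [S.uncurry_enrOf]
    slice_lhs 1 2 => rw [s1]
    have h := S.ηT.naturality (S.ev A B)
    simp only [Functor.id_map] at h
    exact h.symm
  · -- (e4)
    intro A B τ₁ τ₂
    rw [S.uncurry_enrOf, S.uncurry_enrOf, S.uncurry_enrOf]
    slice_lhs 1 2 => rw [natL]
    slice_lhs 2 3 => rw [← Functor.map_comp, evpair, S.uncurry_curry]
    simp only [CategoryTheory.Functor.map_id, Category.id_comp,
      CategoryTheory.Functor.map_comp]
    have h := (S.μT τ₁ τ₂).naturality (S.ev A B)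
    simp only [Functor.comp_map] at h
    slice_lhs 3 4 => rw [h]
    slice_lhs 1 3 => rw [s3]
    simp
end

section
/- If Γ ⇝ Γ', then time Γ ≤ time Γ'. -/
/-- Temporal typing contexts over a type `Ty` of value types. -/
inductive Ctx (Ty : Type) : Type
  | empty : Ctx Ty
  | var : Ctx Ty → Ty → Ctx Ty
  | mod : Ctx Ty → ℕ → Ctx Ty

namespace Ctx

variable {Ty : Type}

/-- The time captured by a context. -/
def time : Ctx Ty → ℕ
  | empty => 0
  | var Γ _ => time Γ
  | mod Γ τ => time Γ + τ

/-- `X ∈ Γ`: some variable extension by `X` occurs in `Γ`. -/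
inductive Mem : Ty → Ctx Ty → Prop
  | here {Γ : Ctx Ty} {X : Ty} : Mem X (var Γ X)
  | thereVar {Γ : Ctx Ty} {X Y : Ty} : Mem X Γ → Mem X (var Γ Y)
  | thereMod {Γ : Ctx Ty} {X : Ty} {τ : ℕ} : Mem X Γ → Mem X (mod Γ τ)

/-- The "time travelling" operation `Γ ∸ τ`. -/
def minus : Ctx Ty → ℕ → Ctx Ty
  | Γ, 0 => Γ
  | empty, _ + 1 => empty
  | var Γ _, τ + 1 => minus Γ (τ + 1)
  | mod Γ τ', τ + 1 =>
      if τ + 1 ≤ τ' then mod Γ (τ' - (τ + 1)) else minus Γ ((τ + 1) - τ')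

/-- Graded membership `X ∈_τ Γ`: `X` occurs in `Γ` with `τ` worth of modalities to its right. -/
inductive MemG : Ty → ℕ → Ctx Ty → Prop
  | here {Γ : Ctx Ty} {X : Ty} : MemG X 0 (var Γ X)
  | thereVar {Γ : Ctx Ty} {X Y : Ty} {τ : ℕ} : MemG X τ Γ → MemG X τ (var Γ Y)
  | thereMod {Γ : Ctx Ty} {X : Ty} {τ τ' : ℕ} : MemG X τ Γ → MemG X (τ + τ') (mod Γ τ')

/-- Context concatenation `Γ ++ Γ'`. -/
def append : Ctx Ty → Ctx Ty → Ctx Ty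
  | Γ, empty => Γ
  | Γ, var Γ' X => var (append Γ Γ') X
  | Γ, mod Γ' τ => mod (append Γ Γ') τ

end Ctx

/-- The renaming relation `Γ ⇝ Γ'`. -/
inductive Ren {Ty : Type} : Ctx Ty → Ctx Ty → Prop
  | id (Γ : Ctx Ty) : Ren Γ Γ
  | comp {Γ Γ' Γ'' : Ctx Ty} : Ren Γ Γ' → Ren Γ' Γ'' → Ren Γ Γ''
  | wk {Γ : Ctx Ty} (X : Ty) : Ren Γ (Ctx.var Γ X)
  | var {Γ : Ctx Ty} {X : Ty} : Ctx.Mem X Γ → Ren (Ctx.var Γ X) Γ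
  | eta {Γ : Ctx Ty} : Ren (Ctx.mod Γ 0) Γ
  | etaInv {Γ : Ctx Ty} : Ren Γ (Ctx.mod Γ 0)
  | mu {Γ : Ctx Ty} (τ τ' : ℕ) : Ren (Ctx.mod Γ (τ + τ')) (Ctx.mod (Ctx.mod Γ τ) τ')
  | muInv {Γ : Ctx Ty} (τ τ' : ℕ) : Ren (Ctx.mod (Ctx.mod Γ τ) τ') (Ctx.mod Γ (τ + τ'))
  | mon {Γ : Ctx Ty} {τ τ' : ℕ} : τ ≤ τ' → Ren (Ctx.mod Γ τ) (Ctx.mod Γ τ')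
  | congVar {Γ Γ' : Ctx Ty} (X : Ty) : Ren Γ Γ' → Ren (Ctx.var Γ X) (Ctx.var Γ' X)
  | congMod {Γ Γ' : Ctx Ty} (τ : ℕ) : Ren Γ Γ' → Ren (Ctx.mod Γ τ) (Ctx.mod Γ' τ)

theorem renaming_le_time {Ty : Type} {Γ Γ' : Ctx Ty} (h : Ren Γ Γ') :
    Ctx.time Γ ≤ Ctx.time Γ' := by
  induction h with
  | id => exact le_refl _
  | comp _ _ ih1 ih2 => exact ih1.trans ih2
  | wk => exact le_refl _
  | var => exact le_refl _
  | eta => simp [Ctx.time]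
  | etaInv => simp [Ctx.time]
  | mu => simp [Ctx.time, Nat.add_assoc]
  | muInv => simp [Ctx.time, Nat.add_assoc]
  | mon h => exact Nat.add_le_add_left h _
  | congVar _ _ ih => exact ih
  | congMod _ _ ih => exact Nat.add_le_add_right ih _
end

section
/- If τ ≤ time Γ, then (Γ ∸ τ),⟨τ⟩ ⇝ Γ. -/
theorem minus_mod_ren {Ty : Type} {Γ : Ctx Ty} {τ : ℕ} (h : τ ≤ Ctx.time Γ) :
    Ren (Ctx.mod (Ctx.minus Γ τ) τ) Γ := by
  induction Γ generalizing τ with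
  | empty =>
    simp [Ctx.time] at h
    subst h
    exact Ren.eta
  | var Γ X ih =>
    cases τ with
    | zero => exact Ren.eta
    | succ τ =>
      have := ih (τ := τ + 1) h
      exact Ren.comp this (Ren.wk X)
  | mod Γ τ' ih =>
    cases τ with
    | zero => exact Ren.eta
    | succ τ =>
      simp only [Ctx.minus]
      by_cases hle : τ + 1 ≤ τ'
      · simp only [if_pos hle]
        have := Ren.muInv (Γ := Γ) (τ' - (τ + 1)) (τ + 1)
        rwa [Nat.sub_add_cancel hle] at this
      · simp only [if_neg hle]
        have hlt : τ' < τ + 1 := Nat.lt_of_not_le hle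
        have h2 : τ + 1 - τ' ≤ Ctx.time Γ := by
          simp [Ctx.time] at h; omega
        have ihr := ih h2
        have heq : τ + 1 - τ' + τ' = τ + 1 := Nat.sub_add_cancel (Nat.le_of_lt hlt)
        have step1 := Ren.mu (Γ := Ctx.minus Γ (τ + 1 - τ')) (τ + 1 - τ') τ'
        rw [heq] at step1
        exact Ren.comp step1 (Ren.congMod τ' ihr)
end

section
/- For every context Γ and every τ : ℕ, Γ ∸ τ ⇝ Γ. -/
theorem minus_ren {Ty : Type} (Γ : Ctx Ty) (τ : ℕ) :
    Ren (Ctx.minus Γ τ) Γ := by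
  induction Γ generalizing τ with
  | empty => cases τ <;> exact Ren.id _
  | var Γ X ih =>
    cases τ with
    | zero => exact Ren.id _
    | succ τ => exact Ren.comp (ih (τ + 1)) (Ren.wk X)
  | mod Γ τ' ih =>
    cases τ with
    | zero => exact Ren.id _
    | succ τ =>
      rw [Ctx.minus]
      split
      · exact Ren.mon (Nat.sub_le _ _)
      · exact Ren.comp (ih _) (Ren.comp Ren.etaInv (Ren.mon (Nat.zero_le _)))
end

section
/- If Γ ⇝ Γ' and X ∈_τ Γ, then there exists τ' : ℕ with τ ≤ τ' such that X ∈_{τ'} Γ'. -/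
theorem mem_memG {Ty : Type} {Γ : Ctx Ty} {X : Ty} (h : Ctx.Mem X Γ) :
    ∃ τ : ℕ, Ctx.MemG X τ Γ := by
  induction h with
  | here => exact ⟨0, Ctx.MemG.here⟩
  | thereVar _ ih => obtain ⟨τ, h⟩ := ih; exact ⟨τ, Ctx.MemG.thereVar h⟩
  | thereMod _ ih => obtain ⟨τ, h⟩ := ih; exact ⟨_, Ctx.MemG.thereMod h⟩

theorem ren_memG {Ty : Type} {Γ Γ' : Ctx Ty} {X : Ty} {τ : ℕ}
    (h : Ren Γ Γ') (hm : Ctx.MemG X τ Γ) :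
    ∃ τ' : ℕ, τ ≤ τ' ∧ Ctx.MemG X τ' Γ' := by
  induction h generalizing τ with
  | id => exact ⟨τ, le_refl _, hm⟩
  | comp _ _ ih1 ih2 =>
      obtain ⟨σ, hσ, hm'⟩ := ih1 hm
      obtain ⟨σ', hσ', hm''⟩ := ih2 hm'
      exact ⟨σ', le_trans hσ hσ', hm''⟩
  | wk X => exact ⟨τ, le_refl _, Ctx.MemG.thereVar hm⟩
  | var hY =>
      cases hm with
      | here => obtain ⟨σ, h⟩ := mem_memG hY; exact ⟨σ, Nat.zero_le _, h⟩
      | thereVar h => exact ⟨τ, le_refl _, h⟩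
  | eta => cases hm with | thereMod h => exact ⟨_, le_refl _, h⟩
  | etaInv => exact ⟨τ + 0, le_refl _, Ctx.MemG.thereMod hm⟩
  | mu τ₁ τ₂ =>
      cases hm with
      | thereMod h =>
          exact ⟨_, le_refl _, by
            rw [← Nat.add_assoc]; exact Ctx.MemG.thereMod (Ctx.MemG.thereMod h)⟩
  | muInv τ₁ τ₂ =>
      cases hm with
      | thereMod h =>
          cases h with
          | thereMod h' =>
              exact ⟨_, le_of_eq (Nat.add_assoc _ _ _), Ctx.MemG.thereMod h'⟩
  | mon hle =>
      cases hm with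
      | thereMod h =>
          exact ⟨_, Nat.add_le_add_left hle _, Ctx.MemG.thereMod h⟩
  | congVar X _ ih =>
      cases hm with
      | here => exact ⟨0, le_refl _, Ctx.MemG.here⟩
      | thereVar h =>
          obtain ⟨σ, hσ, h'⟩ := ih h
          exact ⟨σ, hσ, Ctx.MemG.thereVar h'⟩
  | congMod τ₀ _ ih =>
      cases hm with
      | thereMod h =>
          obtain ⟨σ, hσ, h'⟩ := ih h
          exact ⟨σ + τ₀, Nat.add_le_add_right hσ _, Ctx.MemG.thereMod h'⟩
end
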